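/- arXiv:hep-th/0602041 — 4 statements merged into one kernel-verified Lean document; each statement's English description precedes it below -/
import Mathlib

section
/- (Combinatorial form of Lemma 1.) Let Q be a quiver, let ω be a function assigning to each arrow of Q a displacement vector in ℤ², let S ⊆ ℤ² be a finite set that positively spans ℝ², and for each s ∈ S let φ_s be a function from the arrows of Q to the natural numbers ℕ. Assume: (a) for every oriented cycle γ in Q and every s ∈ S, the sum of φ_s(a) over the arrows a of γ equals ⟨s, Σ_{a∈γ} ω(a)⟩; and (b) for every arrow a of Q there exists s ∈ S with φ_s(a) > 0. Then Q contains no oriented cycle. -/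
/-! The total displacement `d` of an oriented cycle pairs nonnegatively with every `s ∈ S`, because
the `φ s`-weight of the cycle is a sum of natural numbers. As `S` positively spans the plane, the
functional `⟨·, d⟩` vanishes, so `d = 0` and every `φ s`-weight of the cycle is zero, contradicting
the positivity of some `φ s` on its last arrow. -/

open Quiver

/-- Sum of the values of a function on arrows along a path in a quiver. -/
def pathSum {V : Type*} [Quiver V] {M : Type*} [AddCommMonoid M]
    (f : ∀ {u v : V}, (u ⟶ v) → M) {u : V} : ∀ {v : V}, Path u v → M
  | _, Path.nil => 0
  | _, Path.cons p a => pathSum f p + f a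

section PathSum

variable {V : Type*} [Quiver V] {M : Type*} [AddCommMonoid M] [PartialOrder M]
  [IsOrderedAddMonoid M] {f : ∀ {u v : V}, (u ⟶ v) → M}

theorem pathSum_nonneg (hf : ∀ {u v : V} (a : u ⟶ v), 0 ≤ f a) {u : V} :
    ∀ {v : V} (p : Path u v), 0 ≤ pathSum f p
  | _, Path.nil => le_rfl
  | _, Path.cons p a => add_nonneg (pathSum_nonneg hf p) (hf a)

theorem le_pathSum_cons (hf : ∀ {u v : V} (a : u ⟶ v), 0 ≤ f a) {u v w : V}
    (p : Path u v) (a : v ⟶ w) : f a ≤ pathSum f (p.cons a) :=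
  le_add_of_nonneg_left (pathSum_nonneg hf p)

end PathSum

theorem LinearMap.eq_zero_of_nonneg_of_positive_span {𝕜 E ι : Type*} [CommRing 𝕜]
    [PartialOrder 𝕜] [IsOrderedRing 𝕜] [AddCommGroup E] [Module 𝕜 E] (ℓ : E →ₗ[𝕜] 𝕜)
    (S : Finset ι) (v : ι → E)
    (hspan : ∀ x : E, ∃ c : ι → 𝕜, (∀ i ∈ S, 0 ≤ c i) ∧ x = ∑ i ∈ S, c i • v i)
    (hℓ : ∀ i ∈ S, 0 ≤ ℓ (v i)) : ℓ = 0 := by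
  have hnonneg : ∀ x, 0 ≤ ℓ x := fun x => by
    obtain ⟨c, hc, rfl⟩ := hspan x
    rw [map_sum]
    exact Finset.sum_nonneg fun i hi => by
      rw [map_smul, smul_eq_mul]
      exact mul_nonneg (hc i hi) (hℓ i hi)
  ext x
  have := hnonneg (-x)
  rw [map_neg] at this
  exact le_antisymm (neg_nonneg.mp this) (hnonneg x)

theorem eq_zero_of_pairing_nonneg_of_positive_span (S : Finset (ℤ × ℤ))
    (hspan : ∀ x : ℝ × ℝ, ∃ c : ℤ × ℤ → ℝ, (∀ s ∈ S, 0 ≤ c s) ∧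
      x = ∑ s ∈ S, c s • (((s.1 : ℝ), (s.2 : ℝ)) : ℝ × ℝ))
    (d : ℤ × ℤ) (hd : ∀ s ∈ S, 0 ≤ s.1 * d.1 + s.2 * d.2) : d = 0 := by
  let ℓ : ℝ × ℝ →ₗ[ℝ] ℝ := (d.1 : ℝ) • LinearMap.fst ℝ ℝ ℝ + (d.2 : ℝ) • LinearMap.snd ℝ ℝ ℝ
  have hℓ : ℓ = 0 := ℓ.eq_zero_of_nonneg_of_positive_span S _ hspan fun s hs => by
    have : (0 : ℝ) ≤ s.1 * d.1 + s.2 * d.2 := by exact_mod_cast hd s hs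
    simpa [ℓ, mul_comm] using this
  have h1 := LinearMap.congr_fun hℓ (1, 0)
  have h2 := LinearMap.congr_fun hℓ (0, 1)
  simp only [ℓ, LinearMap.add_apply, LinearMap.smul_apply, LinearMap.fst_apply,
    LinearMap.snd_apply, smul_eq_mul, LinearMap.zero_apply] at h1 h2
  ext <;> simp_all

/-- Combinatorial form of Lemma 1: if `ω` assigns displacement vectors in `ℤ²` to arrows,
`S ⊆ ℤ²` positively spans `ℝ²`, and for each `s ∈ S` the nonnegative weight `φ s` sums along
every oriented cycle `γ` to `⟨s, Σ_{a∈γ} ω(a)⟩`, while every arrow has positive `φ s` weight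
for some `s ∈ S`, then the quiver has no oriented cycle. -/
theorem no_oriented_cycle_of_matching_weights {V : Type*} [Quiver V]
    (ω : ∀ {u v : V}, (u ⟶ v) → ℤ × ℤ)
    (S : Finset (ℤ × ℤ))
    (hspan : ∀ x : ℝ × ℝ, ∃ c : ℤ × ℤ → ℝ, (∀ s ∈ S, 0 ≤ c s) ∧
      x = ∑ s ∈ S, c s • (((s.1 : ℝ), (s.2 : ℝ)) : ℝ × ℝ))
    (φ : ℤ × ℤ → ∀ {u v : V}, (u ⟶ v) → ℕ)
    (ha : ∀ s ∈ S, ∀ (v : V) (γ : Quiver.Path v v), γ.length ≠ 0 →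
      (pathSum (fun {u v} (a : u ⟶ v) => (φ s a : ℤ)) γ) =
        s.1 * (pathSum (fun {u v} (a : u ⟶ v) => ω a) γ).1 +
        s.2 * (pathSum (fun {u v} (a : u ⟶ v) => ω a) γ).2)
    (hb : ∀ (u v : V) (a : u ⟶ v), ∃ s ∈ S, 0 < φ s a) :
    ∀ (v : V) (γ : Quiver.Path v v), γ.length = 0 := by
  intro v γ
  by_contra hγ
  have hφ_nonneg (s : ℤ × ℤ) {u w : V} (a : u ⟶ w) : (0 : ℤ) ≤ φ s a := Int.natCast_nonneg _
  have hω_zero : pathSum (fun {u v} (a : u ⟶ v) => ω a) γ = 0 :=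
    eq_zero_of_pairing_nonneg_of_positive_span S hspan _ fun s hs =>
      ha s hs v γ hγ ▸ pathSum_nonneg (hφ_nonneg s) γ
  cases γ with
  | nil => exact hγ rfl
  | cons p a =>
    obtain ⟨s, hs, hpos⟩ := hb _ _ a
    have hle := le_pathSum_cons (hφ_nonneg s) p a
    rw [ha s hs v _ hγ, hω_zero, Prod.fst_zero, Prod.snd_zero] at hle
    omega
end

section
/- Take the fan of ℙ²: v_1 = (1,0), v_2 = (0,1), v_3 = (−1,−1), so ℓ_1(x) = 1 + x_1, ℓ_2(x) = 1 + x_2, ℓ_3(x) = 1 − x_1 − x_2, on the open triangle U = {x ∈ ℝ² : x_1 > −1, x_2 > −1, x_1 + x_2 < 1}. Let H(x)_{ij} = Σ_{r=1}^3 v_{r,i}v_{r,j}/(2ℓ_r(x)) and A_r(x) = ½ H(x)^{-1}(v_r/ℓ_r(x)). Then for all x ∈ U: A_1(x) = (−(x_1 − 2)/3, −(1 + x_2)/3), A_2(x) = (−(1 + x_1)/3, −(x_2 − 2)/3), and A_3(x) = (−(1 + x_1)/3, −(1 + x_2)/3). Consequently A_1 − A_3 ≡ (1,0) and A_2 − A_3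 ≡ (0,1), so the three potentials are gauge-equivalent by integer shifts and determine the same point on the unit Wilson-line torus. -/
/-!
With `a, b, c` the values of `ℓ₁, ℓ₂, ℓ₃`, the Hessian has determinant `(a + b + c) / (4abc)` and
inverse `2 / (a + b + c)` times a matrix with polynomial entries, so each `A_r` is `1 / (a + b + c)`
times a linear expression in `a, b, c`. Since the fan vectors sum to zero, `a + b + c = 3`
identically, and the potentials are affine in `x`.
-/

namespace ProjectivePlane

/-- The Hessian of the canonical symplectic potential of `ℙ²`, in terms of the values
`a, b, c` of `ℓ₁, ℓ₂, ℓ₃`. -/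
noncomputable def hessian (a b c : ℝ) : Matrix (Fin 2) (Fin 2) ℝ :=
  !![1 / (2 * a) + 1 / (2 * c), 1 / (2 * c); 1 / (2 * c), 1 / (2 * b) + 1 / (2 * c)]

theorem hessian_eq_sum (L : Fin 3 → ℝ) (i j : Fin 2) :
    ∑ r, ![![1, 0], ![0, 1], ![-1, -1]] r i * ![![1, 0], ![0, 1], ![-1, -1]] r j / (2 * L r)
      = hessian (L 0) (L 1) (L 2) i j := by
  rw [Fin.sum_univ_three]
  fin_cases i <;> fin_cases j <;> simp [hessian]

section

variable {a b c : ℝ} (ha : a ≠ 0) (hb : b ≠ 0) (hc : c ≠ 0) (hs : a + b + c ≠ 0)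
include ha hb hc hs

theorem hessian_inv :
    (hessian a b c)⁻¹ = (2 / (a + b + c)) • !![a * (b + c), -(a * b); -(a * b), b * (a + c)] := by
  refine Matrix.inv_eq_right_inv ?_
  ext i j
  fin_cases i <;> fin_cases j <;>
    · simp [hessian, Matrix.mul_apply, Fin.sum_univ_two]
      field_simp
      ring

theorem half_smul_hessian_inv_mulVec_zero :
    (1 / 2 : ℝ) • ((hessian a b c)⁻¹).mulVec (a⁻¹ • ![1, 0]) = (a + b + c)⁻¹ • ![b + c, -b] := by
  rw [hessian_inv ha hb hc hs]
  ext i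
  fin_cases i <;> simp <;> field_simp

theorem half_smul_hessian_inv_mulVec_one :
    (1 / 2 : ℝ) • ((hessian a b c)⁻¹).mulVec (b⁻¹ • ![0, 1]) = (a + b + c)⁻¹ • ![-a, a + c] := by
  rw [hessian_inv ha hb hc hs]
  ext i
  fin_cases i <;> simp <;> field_simp

theorem half_smul_hessian_inv_mulVec_two :
    (1 / 2 : ℝ) • ((hessian a b c)⁻¹).mulVec (c⁻¹ • ![-1, -1]) = (a + b + c)⁻¹ • ![-a, -b] := by
  rw [hessian_inv ha hb hc hs]
  ext i
  fin_cases i <;> simp <;> field_simp <;> ring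

end

end ProjectivePlane

/-- Explicit canonical vector potentials for `ℙ²` (equations (4.24)–(4.26)):
with fan `v₁ = (1,0)`, `v₂ = (0,1)`, `v₃ = (−1,−1)`, the canonical potentials
`A_r = ½ H⁻¹ (v_r/ℓ_r)` take the closed forms below on the open triangle, and the
differences `A₁ − A₃ = (1,0)`, `A₂ − A₃ = (0,1)` are constant integer vectors. -/
theorem canonical_potentials_P2
    (v : Fin 3 → Fin 2 → ℝ) (hv : v = ![![1, 0], ![0, 1], ![-1, -1]])
    (ℓ : Fin 3 → (Fin 2 → ℝ) → ℝ)
    (hℓ : ∀ r x, ℓ r x = (∑ i, x i * v r i) + 1)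
    (U : Set (Fin 2 → ℝ))
    (hU : U = {x | -1 < x 0 ∧ -1 < x 1 ∧ x 0 + x 1 < 1})
    (H : (Fin 2 → ℝ) → Matrix (Fin 2) (Fin 2) ℝ)
    (hH : ∀ x i j, H x i j = ∑ r, v r i * v r j / (2 * ℓ r x))
    (A : Fin 3 → (Fin 2 → ℝ) → (Fin 2 → ℝ))
    (hA : ∀ r x, A r x = (1 / 2 : ℝ) • ((H x)⁻¹).mulVec ((ℓ r x)⁻¹ • v r)) :
    ∀ x ∈ U,
      A 0 x = ![-(x 0 - 2) / 3, -(1 + x 1) / 3] ∧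
      A 1 x = ![-(1 + x 0) / 3, -(x 1 - 2) / 3] ∧
      A 2 x = ![-(1 + x 0) / 3, -(1 + x 1) / 3] ∧
      A 0 x - A 2 x = ![1, 0] ∧
      A 1 x - A 2 x = ![0, 1] := by
  subst hv hU
  rintro x ⟨h0, h1, h2⟩
  have hℓ0 : ℓ 0 x = 1 + x 0 := by simp [hℓ, Fin.sum_univ_two]; ring
  have hℓ1 : ℓ 1 x = 1 + x 1 := by simp [hℓ, Fin.sum_univ_two]; ring
  have hℓ2 : ℓ 2 x = 1 - x 0 - x 1 := by simp [hℓ, Fin.sum_univ_two]; ring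
  have hHx : H x = ProjectivePlane.hessian (ℓ 0 x) (ℓ 1 x) (ℓ 2 x) := by
    ext i j
    rw [hH, ProjectivePlane.hessian_eq_sum]
  have hs : ℓ 0 x + ℓ 1 x + ℓ 2 x = 3 := by rw [hℓ0, hℓ1, hℓ2]; ring
  have hs' : ℓ 0 x + ℓ 1 x + ℓ 2 x ≠ 0 := by rw [hs]; norm_num
  obtain ⟨ha, hb, hc⟩ : ℓ 0 x ≠ 0 ∧ ℓ 1 x ≠ 0 ∧ ℓ 2 x ≠ 0 := by
    rw [hℓ0, hℓ1, hℓ2]; refine ⟨?_, ?_, ?_⟩ <;> linarith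
  have e0 : A 0 x = ![-(x 0 - 2) / 3, -(1 + x 1) / 3] := by
    rw [hA, hHx, Matrix.cons_val_zero,
      ProjectivePlane.half_smul_hessian_inv_mulVec_zero ha hb hc hs', hs, hℓ1, hℓ2]
    ext i; fin_cases i <;> simp <;> ring
  have e1 : A 1 x = ![-(1 + x 0) / 3, -(x 1 - 2) / 3] := by
    rw [hA, hHx, Matrix.cons_val_one, Matrix.cons_val_zero,
      ProjectivePlane.half_smul_hessian_inv_mulVec_one ha hb hc hs', hs, hℓ0, hℓ2]
    ext i; fin_cases i <;> simp <;> ring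
  have e2 : A 2 x = ![-(1 + x 0) / 3, -(1 + x 1) / 3] := by
    rw [hA, hHx, Matrix.cons_val_two, Matrix.tail_cons, Matrix.head_cons,
      ProjectivePlane.half_smul_hessian_inv_mulVec_two ha hb hc hs', hs, hℓ0, hℓ1]
    ext i; fin_cases i <;> simp <;> ring
  refine ⟨e0, e1, e2, ?_, ?_⟩
  · rw [e0, e2]; ext i; fin_cases i <;> simp; ring
  · rw [e1, e2]; ext i; fin_cases i <;> simp; ring
end

section
/- Let v_1, …, v_n ∈ ℝ² span ℝ², let ℓ_r(x) = ⟨x, v_r⟩ + 1, let U = {x ∈ ℝ² : ℓ_r(x) > 0 for all r}, let H(x)_{ij} = Σ_r v_{r,i}v_{r,j}/(2ℓ_r(x)), and let A_r(x) = ½ H(x)^{-1}(v_r/ℓ_r(x)). Let c ∈ ℝ² be a corner of the polytope, i.e. there are indices p ≠ q with ℓ_p(c) = ℓ_q(c) = 0, the vectors v_p and v_q linearly independent, and ℓ_r(c) > 0 for all r ∉ {p, q}. Then for every r ∉ {p, q}, A_r(x) → 0 as x → c with x ∈ U. -/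
/-!
Near the corner only `ℓ_p` and `ℓ_q` degenerate, so `ℓ_p ℓ_q H(x) → 0`. On the other hand the
determinant of a sum of rank-one forms `∑ w_s v_s v_sᵀ` is `∑_{a<b} w_a w_b det(v_a, v_b)²`, so
`ℓ_p ℓ_q det H(x) ≥ det(v_p, v_q)² / 4` stays away from zero. In dimension two
`H⁻¹ = (ℓ_p ℓ_q det H)⁻¹ • adj (ℓ_p ℓ_q H)`, hence `H(x)⁻¹ → 0`, and `A_r = ½ ℓ_r⁻¹ H⁻¹ v_r`
follows since `ℓ_r(c) > 0`.
-/

open Filter Topology Matrix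

namespace Matrix

theorem det_of_ne_zero_of_linearIndependent {K : Type*} [Field K] {a b : Fin 2 → K}
    (h : LinearIndependent K ![a, b]) : (of ![a, b]).det ≠ 0 := by
  have : IsUnit (of ![a, b]) := linearIndependent_rows_iff_isUnit.mp h
  exact (isUnit_iff_isUnit_det _).mp this |>.ne_zero

theorem inv_eq_smul_adjugate_smul {n K : Type*} [Fintype n] [DecidableEq n] [Field K]
    (B : Matrix n n K) {t : K} (ht : t ≠ 0) :
    B⁻¹ = (t ^ (Fintype.card n - 1) * B.det)⁻¹ • (t • B).adjugate := by
  rw [adjugate_smul, smul_smul, inv_def, Ring.inverse_eq_inv']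
  congr 1
  field_simp

theorem two_mul_det_sum_smul_vecMulVec {ι R : Type*} [Fintype ι] [CommRing R]
    (w : ι → R) (v : ι → Fin 2 → R) :
    2 * (∑ s, w s • vecMulVec (v s) (v s)).det =
      ∑ a, ∑ b, w a * w b * (of ![v a, v b]).det ^ 2 := by
  set F : ι → ι → R := fun a b =>
    w a * w b * (v a 0 ^ 2 * v b 1 ^ 2 - v a 0 * v a 1 * v b 0 * v b 1)
  have hdet : (∑ s, w s • vecMulVec (v s) (v s)).det = ∑ a, ∑ b, F a b := by
    simp only [det_fin_two, sum_apply, smul_apply, vecMulVec_apply, smul_eq_mul,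
      Finset.sum_mul_sum, ← Finset.sum_sub_distrib, F]
    refine Finset.sum_congr rfl fun a _ => Finset.sum_congr rfl fun b _ => by ring
  have hswap : ∑ a, ∑ b, F a b = ∑ a, ∑ b, F b a := Finset.sum_comm
  rw [two_mul, hdet]
  nth_rewrite 2 [hswap]
  simp only [← Finset.sum_add_distrib, F]
  refine Finset.sum_congr rfl fun a _ => Finset.sum_congr rfl fun b _ => ?_
  simp [det_fin_two]
  ring

theorem mul_mul_det_sq_le_det_sum_smul_vecMulVec {ι R : Type*} [Fintype ι] [CommRing R]
    [LinearOrder R] [IsStrictOrderedRing R] {w : ι → R} (hw : ∀ s, 0 ≤ w s)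
    (v : ι → Fin 2 → R) {p q : ι} (hpq : p ≠ q) :
    w p * w q * (of ![v p, v q]).det ^ 2 ≤ (∑ s, w s • vecMulVec (v s) (v s)).det := by
  classical
  set G : ι → ι → R := fun a b => w a * w b * (of ![v a, v b]).det ^ 2
  have hG : ∀ a b, 0 ≤ G a b := fun a b => by have := hw a; have := hw b; positivity
  have hswap : G q p = G p q := by simp [G, det_fin_two]; ring
  have hrow : ∀ a, 0 ≤ ∑ b, G a b := fun a => Finset.sum_nonneg fun b _ => hG a b
  suffices 2 * G p q ≤ 2 * (∑ s, w s • vecMulVec (v s) (v s)).det from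
    le_of_mul_le_mul_left this two_pos
  rw [two_mul_det_sum_smul_vecMulVec]
  calc 2 * G p q = G p q + G q p := by rw [hswap, two_mul]
    _ ≤ ∑ b, G p b + ∑ b, G q b := add_le_add
        (Finset.single_le_sum (fun b _ => hG p b) (Finset.mem_univ q))
        (Finset.single_le_sum (fun b _ => hG q b) (Finset.mem_univ p))
    _ = ∑ a ∈ {p, q}, ∑ b, G a b := (Finset.sum_pair (f := fun a => ∑ b, G a b) hpq).symm
    _ ≤ ∑ a, ∑ b, G a b :=
        Finset.sum_le_sum_of_subset_of_nonneg (Finset.subset_univ _) fun a _ _ => hrow a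

end Matrix

section Corner

variable {X ι : Type*} [TopologicalSpace X] {ℓ : ι → X → ℝ} {U : Set X} {c : X}
  {p q : ι}

theorem tendsto_mul_div_nhdsWithin_corner (hℓ : ∀ s, ContinuousAt (ℓ s) c)
    (hU : ∀ x ∈ U, ∀ s, ℓ s x ≠ 0) (hp : ℓ p c = 0) (hq : ℓ q c = 0)
    (hpos : ∀ s, s ≠ p → s ≠ q → ℓ s c ≠ 0) (s : ι) :
    Tendsto (fun x => ℓ p x * ℓ q x / ℓ s x) (𝓝[U] c) (𝓝 0) := by
  have hlim : ∀ s, Tendsto (ℓ s) (𝓝[U] c) (𝓝 (ℓ s c)) :=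
    fun s => (hℓ s).tendsto.mono_left nhdsWithin_le_nhds
  by_cases hsp : s = p
  · subst hsp
    refine (hq ▸ hlim q).congr' (eventuallyEq_of_mem self_mem_nhdsWithin fun x hx => ?_)
    simp [mul_div_cancel_left₀ _ (hU x hx s)]
  by_cases hsq : s = q
  · subst hsq
    refine (hp ▸ hlim p).congr' (eventuallyEq_of_mem self_mem_nhdsWithin fun x hx => ?_)
    simp [mul_div_cancel_right₀ _ (hU x hx s)]
  have h := ((hlim p).mul (hlim q)).div (hlim s) (hpos s hsp hsq)
  rwa [hp, zero_mul, zero_div] at h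

theorem tendsto_mul_smul_sum_smul_vecMulVec_nhdsWithin_corner [Fintype ι] (v : ι → Fin 2 → ℝ)
    (hℓ : ∀ s, ContinuousAt (ℓ s) c) (hU : ∀ x ∈ U, ∀ s, ℓ s x ≠ 0) (hp : ℓ p c = 0)
    (hq : ℓ q c = 0) (hpos : ∀ s, s ≠ p → s ≠ q → ℓ s c ≠ 0) :
    Tendsto (fun x => (ℓ p x * ℓ q x) • ∑ s, (2 * ℓ s x)⁻¹ • vecMulVec (v s) (v s))
      (𝓝[U] c) (𝓝 0) := by
  have hterm : ∀ s, Tendsto (fun x => (ℓ p x * ℓ q x * (2 * ℓ s x)⁻¹) • vecMulVec (v s) (v s))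
      (𝓝[U] c) (𝓝 0) := fun s => by
    have h := ((tendsto_mul_div_nhdsWithin_corner hℓ hU hp hq hpos s).div_const 2).smul_const
      (vecMulVec (v s) (v s))
    rw [zero_div, zero_smul] at h
    refine h.congr fun x => ?_
    rw [div_div, mul_comm _ (2 : ℝ), div_eq_mul_inv]
  simp only [Finset.smul_sum, smul_smul]
  simpa using tendsto_finsetSum Finset.univ fun s _ => hterm s

theorem det_sq_div_four_le_mul_mul_det_sum_inv_smul_vecMulVec [Fintype ι] {L : ι → ℝ}
    (hL : ∀ s, 0 < L s) (v : ι → Fin 2 → ℝ) (hpq : p ≠ q) :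
    (of ![v p, v q]).det ^ 2 / 4 ≤
      L p * L q * (∑ s, (2 * L s)⁻¹ • vecMulVec (v s) (v s)).det := by
  have h := mul_mul_det_sq_le_det_sum_smul_vecMulVec (w := fun s => (2 * L s)⁻¹)
    (fun s => (inv_pos.2 (by linarith [hL s])).le) v hpq
  have hp := hL p
  have hq := hL q
  calc (of ![v p, v q]).det ^ 2 / 4
      = L p * L q * ((2 * L p)⁻¹ * (2 * L q)⁻¹ * (of ![v p, v q]).det ^ 2) := by
        field_simp; ring
    _ ≤ _ := by gcongr

theorem tendsto_inv_sum_inv_smul_vecMulVec_nhdsWithin_corner [Fintype ι] {v : ι → Fin 2 → ℝ}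
    (hℓ : ∀ s, ContinuousAt (ℓ s) c) (hU : ∀ x ∈ U, ∀ s, 0 < ℓ s x) (hpq : p ≠ q)
    (hp : ℓ p c = 0) (hq : ℓ q c = 0) (hpos : ∀ s, s ≠ p → s ≠ q → ℓ s c ≠ 0)
    (hli : LinearIndependent ℝ ![v p, v q]) :
    Tendsto (fun x => (∑ s, (2 * ℓ s x)⁻¹ • vecMulVec (v s) (v s))⁻¹) (𝓝[U] c) (𝓝 0) := by
  set H := fun x => ∑ s, (2 * ℓ s x)⁻¹ • vecMulVec (v s) (v s)
  have hd : 0 < (of ![v p, v q]).det ^ 2 := by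
    have := det_of_ne_zero_of_linearIndependent hli
    positivity
  have hbdd : IsBoundedUnder (· ≤ ·) (𝓝[U] c)
      (norm ∘ fun x => (ℓ p x * ℓ q x * (H x).det)⁻¹) := by
    refine isBoundedUnder_of_eventually_le (a := 4 / (of ![v p, v q]).det ^ 2) ?_
    filter_upwards [self_mem_nhdsWithin] with x hx
    have hdet := det_sq_div_four_le_mul_mul_det_sum_inv_smul_vecMulVec (hU x hx) v hpq
    rw [Function.comp_apply, norm_inv, Real.norm_of_nonneg (by linarith [div_pos hd four_pos]),
      ← inv_div]
    exact inv_anti₀ (div_pos hd four_pos) hdet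
  have hadj : Tendsto (fun x => ((ℓ p x * ℓ q x) • H x).adjugate) (𝓝[U] c) (𝓝 0) :=
    (continuous_id.matrix_adjugate.tendsto' 0 0 (by simp)).comp
      (tendsto_mul_smul_sum_smul_vecMulVec_nhdsWithin_corner v hℓ
        (fun x hx s => (hU x hx s).ne') hp hq hpos)
  refine (tendsto_pi_nhds.2 fun i => tendsto_pi_nhds.2 fun j =>
    hbdd.smul_tendsto_zero ((hadj.apply_nhds i).apply_nhds j)).congr' ?_
  filter_upwards [self_mem_nhdsWithin] with x hx
  rw [inv_eq_smul_adjugate_smul _ (mul_pos (hU x hx p) (hU x hx q)).ne', Fintype.card_fin,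
    pow_one]
  rfl

end Corner

theorem canonical_potential_vanishes_at_corner_general {n : ℕ} (v : Fin n → Fin 2 → ℝ)
    (ℓ : Fin n → (Fin 2 → ℝ) → ℝ)
    (hℓ : ∀ r x, ℓ r x = (∑ i, x i * v r i) + 1)
    (U : Set (Fin 2 → ℝ))
    (hU : U = {x | ∀ r, 0 < ℓ r x})
    (H : (Fin 2 → ℝ) → Matrix (Fin 2) (Fin 2) ℝ)
    (hH : ∀ x i j, H x i j = ∑ r, v r i * v r j / (2 * ℓ r x))
    (A : Fin n → (Fin 2 → ℝ) → (Fin 2 → ℝ))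
    (hA : ∀ r x, A r x = (1 / 2 : ℝ) • ((H x)⁻¹).mulVec ((ℓ r x)⁻¹ • v r))
    (c : Fin 2 → ℝ) (p q : Fin n) (hpq : p ≠ q)
    (hp : ℓ p c = 0) (hq : ℓ q c = 0)
    (hli : LinearIndependent ℝ ![v p, v q])
    (hpos : ∀ r, r ≠ p → r ≠ q → 0 < ℓ r c) :
    ∀ r, r ≠ p → r ≠ q →
      Filter.Tendsto (fun x => A r x) (nhdsWithin c U) (nhds 0) := by
  intro r hrp hrq
  have hℓcont : ∀ s, Continuous (ℓ s) := fun s => by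
    rw [funext (hℓ s)]
    fun_prop
  have hUpos : ∀ x ∈ U, ∀ s, 0 < ℓ s x := fun x hx => by rwa [hU] at hx
  have hHsum : ∀ x, H x = ∑ s, (2 * ℓ s x)⁻¹ • vecMulVec (v s) (v s) := fun x => by
    ext i j
    simp only [hH, Matrix.sum_apply, Matrix.smul_apply, vecMulVec_apply, smul_eq_mul,
      div_eq_inv_mul]
  have hinv := tendsto_inv_sum_inv_smul_vecMulVec_nhdsWithin_corner
    (fun s => (hℓcont s).continuousAt) hUpos hpq hp hq (fun s hsp hsq => (hpos s hsp hsq).ne') hli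
  have hvec : Tendsto (fun x => (1 / 2 : ℝ) • (ℓ r x)⁻¹ • v r) (𝓝[U] c)
      (𝓝 ((1 / 2 : ℝ) • (ℓ r c)⁻¹ • v r)) :=
    ((((hℓcont r).continuousAt.tendsto.mono_left nhdsWithin_le_nhds).inv₀
      (hpos r hrp hrq).ne').smul_const (v r)).const_smul _
  simp only [← hHsum] at hinv
  have hlim : Tendsto (fun x => (H x)⁻¹ *ᵥ ((1 / 2 : ℝ) • (ℓ r x)⁻¹ • v r)) (𝓝[U] c)
      (𝓝 (0 *ᵥ ((1 / 2 : ℝ) • (ℓ r c)⁻¹ • v r))) :=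
    ((continuous_fst.matrix_mulVec continuous_snd).tendsto _).comp (hinv.prodMk_nhds hvec)
  rw [zero_mulVec] at hlim
  exact hlim.congr fun x => by rw [hA, mulVec_smul]

/-- The canonical vector potentials `A_r` vanish in the limit at every corner `c` of the
moment polytope at which they are well defined, i.e. for all `r` with `ℓ_r(c) > 0`. -/
theorem canonical_potential_vanishes_at_corner {n : ℕ} (v : Fin n → Fin 2 → ℝ)
    (hspan : Submodule.span ℝ (Set.range v) = ⊤)
    (ℓ : Fin n → (Fin 2 → ℝ) → ℝ)
    (hℓ : ∀ r x, ℓ r x = (∑ i, x i * v r i) + 1)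
    (U : Set (Fin 2 → ℝ))
    (hU : U = {x | ∀ r, 0 < ℓ r x})
    (H : (Fin 2 → ℝ) → Matrix (Fin 2) (Fin 2) ℝ)
    (hH : ∀ x i j, H x i j = ∑ r, v r i * v r j / (2 * ℓ r x))
    (A : Fin n → (Fin 2 → ℝ) → (Fin 2 → ℝ))
    (hA : ∀ r x, A r x = (1 / 2 : ℝ) • ((H x)⁻¹).mulVec ((ℓ r x)⁻¹ • v r))
    (c : Fin 2 → ℝ) (p q : Fin n) (hpq : p ≠ q)
    (hp : ℓ p c = 0) (hq : ℓ q c = 0)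
    (hli : LinearIndependent ℝ ![v p, v q])
    (hpos : ∀ r, r ≠ p → r ≠ q → 0 < ℓ r c) :
    ∀ r, r ≠ p → r ≠ q →
      Filter.Tendsto (fun x => A r x) (nhdsWithin c U) (nhds 0) :=
  canonical_potential_vanishes_at_corner_general v ℓ hℓ U hU H hH A hA c p q hpq hp hq hli hpos
end

section
/- Let K be a ℤ-module, let χ : K × K → ℤ be biadditive, and let (e_1, …, e_n) and (e_1^∨, …, e_n^∨) be families in K such that every F ∈ K admits the two decompositions F = Σ_{j=1}^n χ(e_j, F) · e_j^∨ and F = Σ_{j=1}^n χ(F, e_j^∨) · e_j. Let rk : K → ℤ be an additive map, and suppose p ∈ K satisfies rk(p) = 0 and χ(e_i, p) = rk(e_i) for all i. Then Σ_{i=1}^n Σ_{j=1}^n rk(e_i) · rk(e_j) · χ(e_j^∨, e_i^∨) = 0. In particular, if rk(e_i) = 1 for all i, the sum of all entries of the matrix χ(e_j^∨, e_i^∨) vanishes. -/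
/-!
The first decomposition writes the point class as `p = Σ_j rk(e_j) e_j^∨`, so the double sum
is `χ(p, p)`. The second decomposition shows that `χ(·, p)` and `rk` agree on every class,
since they agree on the `e_i`; hence `χ(p, p) = rk p = 0`.
-/

namespace AddMonoidHom

variable {K : Type*} [AddCommGroup K]

def ofBiadditive (χ : K → K → ℤ)
    (hχ₁ : ∀ a b c : K, χ (a + b) c = χ a c + χ b c)
    (hχ₂ : ∀ a b c : K, χ a (b + c) = χ a b + χ a c) : K →+ K →+ ℤ :=
  mk' (fun a => mk' (χ a) (hχ₂ a)) fun a b => ext (hχ₁ a b)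

variable {ι : Type*} [Fintype ι]

theorem apply_sum_zsmul_sum_zsmul (B : K →+ K →+ ℤ) (a b : ι → ℤ) (x y : ι → K) :
    B (∑ i, a i • x i) (∑ j, b j • y j) = ∑ j, ∑ i, b j * a i * B (x i) (y j) := by
  simp only [map_sum, map_zsmul, finsetSum_apply, zsmul_apply, smul_eq_mul, Finset.mul_sum,
    mul_assoc]

theorem apply_eq_of_eq_on_decomposing_family (B : K →+ K →+ ℤ) (rk : K →+ ℤ) (e edual : ι → K)
    (hdec : ∀ F : K, F = ∑ j, B F (edual j) • e j) {p : K} (hep : ∀ i, B (e i) p = rk (e i))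
    (a : K) : B a p = rk a := by
  rw [hdec a]
  simp [hep, mul_comm]

end AddMonoidHom

open AddMonoidHom in
/-- K-theory lattice form of the vanishing-Euler-character argument: if `χ` is a biadditive
pairing, `(e_i)` and `(e_i^∨)` mutually decompose every class, `rk` is additive, and `p`
is a point class (`rk p = 0`, `χ(e_i, p) = rk e_i`), then
`Σ_{i,j} rk(e_i) rk(e_j) χ(e_j^∨, e_i^∨) = 0`. -/
theorem euler_character_sum_vanishes {K : Type*} [AddCommGroup K] {n : ℕ}
    (χ : K → K → ℤ)
    (hχ₁ : ∀ a b c : K, χ (a + b) c = χ a c + χ b c)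
    (hχ₂ : ∀ a b c : K, χ a (b + c) = χ a b + χ a c)
    (e edual : Fin n → K)
    (hdec₁ : ∀ F : K, F = ∑ j, χ (e j) F • edual j)
    (hdec₂ : ∀ F : K, F = ∑ j, χ F (edual j) • e j)
    (rk : K →+ ℤ)
    (p : K) (hp : rk p = 0) (hep : ∀ i, χ (e i) p = rk (e i)) :
    ∑ i, ∑ j, rk (e i) * rk (e j) * χ (edual j) (edual i) = 0 := by
  set B := ofBiadditive χ hχ₁ hχ₂
  have hp_dec : p = ∑ j, rk (e j) • edual j := by
    conv_lhs => rw [hdec₁ p]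
    simp only [hep]
  calc ∑ i, ∑ j, rk (e i) * rk (e j) * χ (edual j) (edual i)
      = B p p := by
        rw [hp_dec, apply_sum_zsmul_sum_zsmul]
        rfl
    _ = rk p := apply_eq_of_eq_on_decomposing_family B rk e edual hdec₂ hep p
    _ = 0 := hp
end
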